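/- arXiv:2111.00468 — 5 statements merged into one kernel-verified Lean document; each statement's English description precedes it below -/
import Mathlib

section
/- Let f, g : ℝ → ℝ be strictly convex functions with minimizers y_f = argmin f and y_g = argmin g satisfying y_f ≥ y_g. Then for any z ≤ z' there exists θ ∈ ℝ with z ≤ θ ≤ z' (or θ in the interval [y_g, y_f]) such that f(θ) + g(θ) ≤ f(z) + g(z'). Hence the minimum of f(z) + g(z') subject to z ≤ z' is attained with z = z'. -/
/-!
A convex function on a line is antitone left of a minimizer and monotone right of it.
Take `θ = max z y_g`. Moving `z` up towards `y_g ≤ y_f` does not increase `f`, and `θ` lies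
between `y_g` and `z'` unless `z' < y_g`, in which case `θ = y_g` minimizes `g`.
-/

open Set

section

variable {𝕜 β : Type*} [Field 𝕜] [LinearOrder 𝕜] [IsStrictOrderedRing 𝕜]
  [AddCommMonoid β] [LinearOrder β] [IsOrderedCancelAddMonoid β] [Module 𝕜 β]
  [PosSMulStrictMono 𝕜 β] {s : Set 𝕜} {f : 𝕜 → β} {m : 𝕜}

theorem ConvexOn.monotoneOn_inter_Ici_of_isMinOn (hf : ConvexOn 𝕜 s f) (hm : IsMinOn f s m)
    (hms : m ∈ s) : MonotoneOn f (s ∩ Ici m) := by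
  rintro a ⟨has, hma⟩ b ⟨hbs, -⟩ hab
  rcases hma.eq_or_lt with rfl | hma
  · exact hm hbs
  · exact hf.le_right_of_left_le'' hms hbs hma hab (hm has)

theorem ConvexOn.antitoneOn_inter_Iic_of_isMinOn (hf : ConvexOn 𝕜 s f) (hm : IsMinOn f s m)
    (hms : m ∈ s) : AntitoneOn f (s ∩ Iic m) := by
  rintro a ⟨has, -⟩ b ⟨hbs, hbm⟩ hab
  rcases hbm.eq_or_lt with rfl | hbm
  · exact hm has
  · exact hf.le_left_of_right_le'' has hms hab hbm (hm hbs)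

variable (hf : ConvexOn 𝕜 univ f) (hm : IsMinOn f univ m)
include hf hm

theorem ConvexOn.apply_max_le_apply_of_le_minimizer {a c : 𝕜} (hcm : c ≤ m) :
    f (max a c) ≤ f a := by
  rcases le_total c a with hca | hac
  · rw [max_eq_left hca]
  · rw [max_eq_right hac]
    have hanti := hf.antitoneOn_inter_Iic_of_isMinOn hm (mem_univ m)
    exact hanti ⟨mem_univ a, hac.trans hcm⟩ ⟨mem_univ c, hcm⟩ hac

theorem ConvexOn.apply_max_minimizer_le_apply_of_le {a b : 𝕜} (hab : a ≤ b) :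
    f (max a m) ≤ f b := by
  rcases le_or_gt m b with hmb | hbm
  · have hmono := hf.monotoneOn_inter_Ici_of_isMinOn hm (mem_univ m)
    exact hmono ⟨mem_univ _, le_max_right a m⟩ ⟨mem_univ b, hmb⟩ (max_le hab hmb)
  · rw [max_eq_right (hab.trans hbm.le)]
    exact hm (mem_univ b)

end

/-- for strictly convex `f, g` with minimizers in reversed order,
the minimum of `f z + g z'` subject to `z ≤ z'` is attained on the diagonal. -/
theorem stmt_1 (f g : ℝ → ℝ)
    (hf : StrictConvexOn ℝ Set.univ f) (hg : StrictConvexOn ℝ Set.univ g)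
    (yf yg : ℝ) (hyf : ∀ z, f yf ≤ f z) (hyg : ∀ z, g yg ≤ g z)
    (hy : yg ≤ yf) (z z' : ℝ) (hz : z ≤ z') :
    ∃ θ : ℝ, ((z ≤ θ ∧ θ ≤ z') ∨ (yg ≤ θ ∧ θ ≤ yf)) ∧
      f θ + g θ ≤ f z + g z' := by
  have hf_le : f (max z yg) ≤ f z :=
    hf.convexOn.apply_max_le_apply_of_le_minimizer (fun x _ => hyf x) hy
  have hg_le : g (max z yg) ≤ g z' :=
    hg.convexOn.apply_max_minimizer_le_apply_of_le (fun x _ => hyg x) hz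
  refine ⟨max z yg, ?_, add_le_add hf_le hg_le⟩
  rcases le_or_gt (max z yg) z' with hθz' | hz'θ
  · exact Or.inl ⟨le_max_left z yg, hθz'⟩
  · have hzyg : z ≤ yg :=
      (lt_max_iff.1 hz'θ).elim (fun h => absurd hz h.not_ge) fun h => hz.trans h.le
    rw [max_eq_right hzyg]
    exact Or.inr ⟨le_rfl, hy⟩
end

section
/- Let y_1, ..., y_N ∈ ℝ. Suppose z* = (z*_1, ..., z*_N) minimizes Σ_{n=1}^N (z_n - y_n)² subject to z_1 ≤ z_2 ≤ ... ≤ z_N. Then for every n with y_n ≥ y_{n+1}, we have z*_n = z*_{n+1}. -/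
/-!
If `z i < z j` for adjacent indices `i ⋖ j` with `y j ≤ y i`, then either `z i < y i` or
`y j < z j`. In the first case `z i` can be raised towards `y i`, in the second `z j` lowered
towards `y j`, without leaving the interval `[z i, z j]`; either move keeps `z` monotone and
strictly decreases the square error.
-/

open Finset Function

theorem Monotone.update_of_le_of_le {ι α : Type*} [PartialOrder ι] [Preorder α] [DecidableEq ι]
    {f : ι → α} (hf : Monotone f) {k : ι} {c : α}
    (hlt : ∀ l < k, f l ≤ c) (hgt : ∀ l, k < l → c ≤ f l) : Monotone (update f k c) := by
  intro j l hjl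
  rcases eq_or_ne j k with rfl | hj <;> rcases eq_or_ne l j with rfl | hl
  · exact le_rfl
  · simpa [hl] using hgt l (lt_of_le_of_ne hjl hl.symm)
  · exact le_rfl
  · rcases eq_or_ne l k with rfl | hlk
    · simpa [hj] using hlt j (lt_of_le_of_ne hjl hj)
    · simpa [hj, hlk] using hf hjl

theorem Finset.sum_apply_update_lt {ι α β : Type*} [Fintype ι] [DecidableEq ι]
    [AddCommMonoid β] [PartialOrder β] [IsOrderedCancelAddMonoid β]
    (g : ι → α → β) (f : ι → α) {k : ι} {c : α} (h : g k c < g k (f k)) :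
    ∑ n, g n (update f k c n) < ∑ n, g n (f n) := by
  refine sum_lt_sum (fun n _ => ?_) ⟨k, mem_univ k, by simpa using h⟩
  rcases eq_or_ne n k with rfl | hn
  · simpa using h.le
  · simp [hn]

theorem eq_of_covBy_of_isMinOn_sum_sq {ι : Type*} [Fintype ι] [LinearOrder ι]
    {y z : ι → ℝ} (hz : Monotone z)
    (hmin : IsMinOn (fun w : ι → ℝ => ∑ n, (w n - y n) ^ 2) {w | Monotone w} z)
    {i j : ι} (hij : i ⋖ j) (hy : y j ≤ y i) : z i = z j := by
  by_contra hne
  have hlt : z i < z j := lt_of_le_of_ne (hz hij.le) hne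
  have improve : ∀ k c, Monotone (update z k c) → (c - y k) ^ 2 < (z k - y k) ^ 2 → False :=
    fun k c hmono hc => (hmin hmono).not_gt <|
      sum_apply_update_lt (fun n x => (x - y n) ^ 2) z hc
  by_cases hzi : z i < y i
  · refine improve i (min (z j) (y i)) ?_ ?_
    · exact hz.update_of_le_of_le (fun l hl => (hz hl.le).trans (le_min hlt.le hzi.le))
        fun l hl => (min_le_left _ _).trans (hz (hij.ge_of_gt hl))
    · have : z i < min (z j) (y i) := lt_min hlt hzi
      nlinarith [min_le_right (z j) (y i)]
  · have hzj : y j < z j := by linarith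
    refine improve j (max (z i) (y j)) ?_ ?_
    · exact hz.update_of_le_of_le (fun l hl => (hz (hij.le_of_lt hl)).trans (le_max_left _ _))
        fun l hl => (max_le hlt.le hzj.le).trans (hz hl.le)
    · have : max (z i) (y j) < z j := max_lt hlt hzj
      nlinarith [le_max_right (z i) (y j)]

/-- any isotonic minimizer of the square error merges adjacent
samples whose targets are in (weakly) reversed order. -/
theorem stmt_7 (N : ℕ) (y zstar : Fin N → ℝ) (hmono : Monotone zstar)
    (hmin : ∀ z : Fin N → ℝ, Monotone z →
      (∑ n, (zstar n - y n) ^ 2) ≤ ∑ n, (z n - y n) ^ 2)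
    (i : Fin N) (hi : i.val + 1 < N)
    (hy : y ⟨i.val + 1, hi⟩ ≤ y i) :
    zstar i = zstar ⟨i.val + 1, hi⟩ :=
  eq_of_covBy_of_isMinOn_sum_sq hmono hmin (by simp [Fin.covBy_iff]) hy
end

section
/- Let l_1, ..., l_N : ℝ → ℝ be strictly convex functions with unique minimizers y_1, ..., y_N. Suppose z* = (z*_1, ..., z*_N) minimizes Σ_{n=1}^N l_n(z_n) subject to z_1 ≤ ... ≤ z_N. Then for every n with y_n ≥ y_{n+1}, we have z*_n = z*_{n+1}. -/
/-- A strictly convex function with global minimum at `y` is strictly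
decreasing to the left of `y`. -/
lemma aux_dec (l : ℝ → ℝ) (hc : StrictConvexOn ℝ Set.univ l) (y : ℝ)
    (hy : ∀ z, l y ≤ l z) (hyu : ∀ w, (∀ z, l w ≤ l z) → w = y) :
    ∀ a b : ℝ, a < b → b ≤ y → l b < l a := by
  intro a b hab hby
  rcases eq_or_lt_of_le hby with rfl | hblt
  · -- b = y : use uniqueness
    rcases lt_or_eq_of_le (hy a) with h | h
    · exact h
    · exfalso
      have : a = b := hyu a (fun z => h ▸ hy z)
      exact absurd this (ne_of_lt hab)
  · -- a < b < y
    have hay : a < y := lt_trans hab hblt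
    set θ : ℝ := (y - b) / (y - a) with hθdef
    have hden : (0:ℝ) < y - a := by linarith
    have hθpos : 0 < θ := div_pos (by linarith) hden
    have hθlt : θ < 1 := (div_lt_one hden).2 (by linarith)
    have h1θ : 0 < 1 - θ := by linarith
    have hsum : θ + (1 - θ) = 1 := by ring
    have hθmul : θ * (y - a) = y - b := by
      rw [hθdef]; field_simp
    have hcomb : θ • a + (1 - θ) • y = b := by
      rw [smul_eq_mul, smul_eq_mul]; linear_combination -hθmul
    have hane : a ≠ y := ne_of_lt hay
    have := hc.2 (Set.mem_univ a) (Set.mem_univ y) hane hθpos h1θ hsum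
    rw [hcomb] at this
    have hya : l y ≤ l a := hy a
    calc l b < θ * l a + (1 - θ) * l y := this
      _ ≤ θ * l a + (1 - θ) * l a := by nlinarith
      _ = l a := by ring

/-- A strictly convex function with global minimum at `y` is strictly
increasing to the right of `y`. -/
lemma aux_inc (l : ℝ → ℝ) (hc : StrictConvexOn ℝ Set.univ l) (y : ℝ)
    (hy : ∀ z, l y ≤ l z) (hyu : ∀ w, (∀ z, l w ≤ l z) → w = y) :
    ∀ a b : ℝ, y ≤ a → a < b → l a < l b := by
  intro a b hya hab
  rcases eq_or_lt_of_le hya with rfl | halt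
  · rcases lt_or_eq_of_le (hy b) with h | h
    · exact h
    · exfalso
      have hb : b = y := hyu b (fun z => h ▸ hy z)
      exact absurd hb hab.ne'
  · -- y < a < b
    have hyb : y < b := lt_trans halt hab
    set θ : ℝ := (b - a) / (b - y) with hθdef
    have hden : (0:ℝ) < b - y := by linarith
    have hθpos : 0 < θ := div_pos (by linarith) hden
    have hθlt : θ < 1 := (div_lt_one hden).2 (by linarith)
    have h1θ : 0 < 1 - θ := by linarith
    have hsum : θ + (1 - θ) = 1 := by ring
    have hθmul : θ * (b - y) = b - a := by
      rw [hθdef]; field_simp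
    have hcomb : θ • y + (1 - θ) • b = a := by
      rw [smul_eq_mul, smul_eq_mul]; linear_combination -hθmul
    have hne : y ≠ b := ne_of_lt hyb
    have := hc.2 (Set.mem_univ y) (Set.mem_univ b) hne hθpos h1θ hsum
    rw [hcomb] at this
    have hyb' : l y ≤ l b := hy b
    calc l a < θ * l y + (1 - θ) * l b := this
      _ ≤ θ * l b + (1 - θ) * l b := by nlinarith
      _ = l b := by ring

/-- any isotonic minimizer of a sum of strictly convex per-sample
losses merges adjacent samples whose loss minimizers are in reversed order. -/
theorem stmt_8 (N : ℕ) (l : Fin N → ℝ → ℝ)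
    (hconv : ∀ n, StrictConvexOn ℝ Set.univ (l n))
    (y : Fin N → ℝ) (hy : ∀ n, ∀ z, l n (y n) ≤ l n z)
    (hyu : ∀ n w, (∀ z, l n w ≤ l n z) → w = y n)
    (zstar : Fin N → ℝ) (hmono : Monotone zstar)
    (hmin : ∀ z : Fin N → ℝ, Monotone z →
      (∑ n, l n (zstar n)) ≤ ∑ n, l n (z n))
    (i : Fin N) (hi : i.val + 1 < N)
    (hrev : y ⟨i.val + 1, hi⟩ ≤ y i) :
    zstar i = zstar ⟨i.val + 1, hi⟩ := by
  set i1 : Fin N := ⟨i.val + 1, hi⟩ with hi1def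
  have hii1 : i < i1 := by simp [Fin.lt_def, hi1def]
  by_contra hne
  have hst : zstar i < zstar i1 :=
    lt_of_le_of_ne (hmono (le_of_lt hii1)) hne
  set s := zstar i with hs
  set t := zstar i1 with ht
  -- generic contradiction from a strictly better monotone perturbation
  have key : ∀ (n : Fin N) (m : ℝ), l n m < l n (zstar n) →
      Monotone (Function.update zstar n m) → False := by
    intro n m hlt hmon
    have hle := hmin _ hmon
    have hlt' : (∑ k, l k (Function.update zstar n m k)) < ∑ k, l k (zstar k) := by
      apply Finset.sum_lt_sum
      · intro k _
        by_cases hk : k = n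
        · subst hk; rw [Function.update_self]; exact le_of_lt hlt
        · rw [Function.update_of_ne hk]
      · exact ⟨n, Finset.mem_univ n, by rw [Function.update_self]; exact hlt⟩
    exact absurd hle (not_le_of_gt hlt')
  -- Step 1: y i ≤ s
  have h1 : y i ≤ s := by
    by_contra h
    push_neg at h
    set m := min (y i) t with hm
    have hsm : s < m := lt_min h hst
    have hmy : m ≤ y i := min_le_left _ _
    have hmt : m ≤ t := min_le_right _ _
    have hlt : l i m < l i s := aux_dec (l i) (hconv i) (y i) (hy i) (hyu i) s m hsm hmy
    apply key i m hlt
    intro j k hjk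
    by_cases hj : j = i <;> by_cases hk : k = i
    · rw [hj, hk]
    · rw [hj, Function.update_self, Function.update_of_ne hk]
      have hik : i < k := lt_of_le_of_ne (hj ▸ hjk) (Ne.symm hk)
      have hik1 : i1 ≤ k := by
        rw [Fin.le_def]; simpa [hi1def] using Nat.succ_le_of_lt (Fin.lt_def.mp hik)
      exact le_trans hmt (hmono hik1)
    · rw [hk, Function.update_of_ne hj, Function.update_self]
      exact le_trans (hmono (hk ▸ hjk)) (le_of_lt hsm)
    · rw [Function.update_of_ne hj, Function.update_of_ne hk]
      exact hmono hjk
  -- Step 2: t ≤ y i1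
  have h2 : t ≤ y i1 := by
    by_contra h
    push_neg at h
    set m := max (y i1) s with hm
    have hmt : m < t := max_lt h hst
    have hym : y i1 ≤ m := le_max_left _ _
    have hsm : s ≤ m := le_max_right _ _
    have hlt : l i1 m < l i1 t :=
      aux_inc (l i1) (hconv i1) (y i1) (hy i1) (hyu i1) m t hym hmt
    apply key i1 m (by rw [ht] at hlt; exact hlt)
    intro j k hjk
    by_cases hj : j = i1 <;> by_cases hk : k = i1
    · rw [hj, hk]
    · rw [hj, Function.update_self, Function.update_of_ne hk]
      have hik : i1 ≤ k := hj ▸ hjk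
      have hmt' : m ≤ zstar i1 := le_of_lt (ht ▸ hmt)
      exact le_trans hmt' (hmono hik)
    · rw [hk, Function.update_of_ne hj, Function.update_self]
      have hji : j ≤ i := by
        rw [Fin.le_def]
        have hlt' : j.val < i.val + 1 := by
          have := Fin.lt_def.mp (lt_of_le_of_ne (hk ▸ hjk) hj)
          simpa [hi1def] using this
        omega
      have : zstar j ≤ s := hs ▸ hmono hji
      exact le_trans this hsm
    · rw [Function.update_of_ne hj, Function.update_of_ne hk]
      exact hmono hjk
  -- contradiction: t ≤ y i1 ≤ y i ≤ s < t
  linarith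
end

section
/- Consider N samples processed online in score-ascending order under weighted square error, maintaining a stack of groups (weighted means and weights) where upon arrival of a new sample one repeatedly merges the top group with its predecessor while the predecessor's weighted mean is ≥ the top group's weighted mean. Then after processing all N samples, the resulting block-constant nondecreasing sequence equals the (unique) isotonic regression of the targets, i.e., the minimizer of Σ α_n (z_n - y_n)² over nondecreasing z. -/
/-!
Every group on the stack covers a contiguous block of samples, and every initial segment of that
block has weighted mean at least the group's mean. Merging the top group into its predecessor when
their means are out of order preserves this, so the final stack partitions the samples into such
blocks with increasing means. On each block, Abel summation against the partial sums shows that the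
constant fit beats every monotone fit, which gives optimality. Uniqueness comes from strict
convexity: the midpoint of two minimizers would do strictly better unless they agree.
-/

open Finset

/-- A group maintained by the online algorithm: its weighted mean, total
weight, and number of samples. -/
structure PavGroup where
  mean : ℝ
  wt : ℝ
  size : ℕ

/-- Push a new group on the stack (head = most recent group), repeatedly
merging it with the preceding group while that group's weighted mean is `≥`
the new group's weighted mean, using the weighted-mean merge rule. -/
noncomputable def pavPush : List PavGroup → PavGroup → List PavGroup
  | [], g => [g]
  | p :: rest, g =>
      if g.mean ≤ p.mean then
        pavPush rest
          ⟨(p.wt * p.mean + g.wt * g.mean) / (p.wt + g.wt), p.wt + g.wt,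
            p.size + g.size⟩
      else g :: p :: rest

/-- Process the samples (targets with weights) in score-ascending order. -/
noncomputable def pavRun (data : List (ℝ × ℝ)) : List PavGroup :=
  data.foldl (fun s p => pavPush s ⟨p.1, p.2, 1⟩) []

/-- Expand the final stack into the fitted block-constant sequence. -/
noncomputable def pavExpand (s : List PavGroup) : List ℝ :=
  s.reverse.flatMap fun g => List.replicate g.size g.mean

theorem List.Pairwise.monotoneOn_getD {β : Type*} [Preorder β] {l : List β}
    (h : l.Pairwise (· ≤ ·)) (d : β) :
    MonotoneOn (fun n => l.getD n d) (Set.Iio l.length) := by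
  intro i hi j hj hij
  simp only [List.getD_eq_getElem _ _ hi, List.getD_eq_getElem _ _ hj]
  exact h.sortedLE.getElem_le_getElem_of_le hij

section OrderedRing

variable {R : Type*} [CommRing R] [LinearOrder R] [IsStrictOrderedRing R]

theorem sum_Ico_mul_nonpos_of_partialSums_nonneg {c z : ℕ → R} {a m : ℕ} (hz : Monotone z)
    (hpartial : ∀ b ≤ m, 0 ≤ ∑ n ∈ Ico a b, c n) (htotal : ∑ n ∈ Ico a m, c n = 0) :
    ∑ n ∈ Ico a m, c n * z n ≤ 0 := by
  rcases lt_or_ge m a with hma | ham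
  · simp [Ico_eq_empty_of_le hma.le]
  -- Abel summation, one term at a time
  have key : ∀ b, a ≤ b → b ≤ m →
      ∑ n ∈ Ico a b, c n * z n ≤ (∑ n ∈ Ico a b, c n) * z b := by
    intro b hab
    induction b, hab using Nat.le_induction with
    | base => simp
    | succ b hab ih =>
      intro hbm
      rw [sum_Ico_succ_top hab, sum_Ico_succ_top hab]
      calc ∑ n ∈ Ico a b, c n * z n + c b * z b
          ≤ (∑ n ∈ Ico a b, c n) * z b + c b * z b := by gcongr; exact ih (by omega)
        _ = (∑ n ∈ Ico a b, c n + c b) * z b := by ring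
        _ ≤ (∑ n ∈ Ico a b, c n + c b) * z (b + 1) := by
          gcongr
          · rw [← sum_Ico_succ_top hab]; exact hpartial _ hbm
          · exact hz b.le_succ
  simpa [htotal] using key m ham le_rfl

end OrderedRing

theorem sum_mul_sub_eq (α y : ℕ → ℝ) (μ : ℝ) (s : Finset ℕ) :
    ∑ n ∈ s, α n * (y n - μ) = ∑ n ∈ s, α n * y n - μ * ∑ n ∈ s, α n := by
  rw [mul_sum, ← sum_sub_distrib]
  exact sum_congr rfl fun n _ => by ring

theorem eq_of_sum_sq_le_of_isMin {N : ℕ} {y α : ℕ → ℝ} (hα : ∀ n, 0 < α n) {v z : ℕ → ℝ}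
    (hv : Monotone v) (hz : Monotone z)
    (hv_min : ∀ w : ℕ → ℝ, Monotone w →
      ∑ n ∈ range N, α n * (v n - y n) ^ 2 ≤ ∑ n ∈ range N, α n * (w n - y n) ^ 2)
    (hzv : ∑ n ∈ range N, α n * (z n - y n) ^ 2 ≤ ∑ n ∈ range N, α n * (v n - y n) ^ 2) :
    ∀ n < N, z n = v n := by
  have hmid : ∑ n ∈ range N, α n * (v n - y n) ^ 2 ≤
      ∑ n ∈ range N, α n * ((z n + v n) / 2 - y n) ^ 2 :=
    hv_min _ fun i j hij => by linarith [hz hij, hv hij]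
  have parallelogram :
      ∑ n ∈ range N, α n * ((z n + v n) / 2 - y n) ^ 2 + ∑ n ∈ range N, α n * ((z n - v n) / 2) ^ 2 =
        (∑ n ∈ range N, α n * (z n - y n) ^ 2 + ∑ n ∈ range N, α n * (v n - y n) ^ 2) / 2 := by
    rw [← sum_add_distrib, ← sum_add_distrib, sum_div]
    exact sum_congr rfl fun n _ => by ring
  have hterm_nonneg : ∀ n ∈ range N, 0 ≤ α n * ((z n - v n) / 2) ^ 2 :=
    fun n _ => mul_nonneg (hα n).le (sq_nonneg _)
  have hzero : ∑ n ∈ range N, α n * ((z n - v n) / 2) ^ 2 = 0 :=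
    le_antisymm (by linarith) (sum_nonneg hterm_nonneg)
  intro n hn
  have := (sum_eq_zero_iff_of_nonneg hterm_nonneg).1 hzero n (mem_range.2 hn)
  simpa [(hα n).ne', sub_eq_zero] using this

namespace PavGroup

variable {y α : ℕ → ℝ} {a : ℕ} {p g : PavGroup}

noncomputable def merge (p g : PavGroup) : PavGroup :=
  ⟨(p.wt * p.mean + g.wt * g.mean) / (p.wt + g.wt), p.wt + g.wt, p.size + g.size⟩

/-- `g` summarizes the samples `a, …, a + g.size - 1`. The last field (every initial segment of
the block has weighted mean at least `g.mean`) is what makes the constant `g.mean` the best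
monotone fit on the block. -/
structure IsBlock (y α : ℕ → ℝ) (a : ℕ) (g : PavGroup) : Prop where
  wt_pos : 0 < g.wt
  wt_eq : g.wt = ∑ n ∈ Ico a (a + g.size), α n
  wt_mul_mean : g.wt * g.mean = ∑ n ∈ Ico a (a + g.size), α n * y n
  mean_mul_le : ∀ b ≤ a + g.size, g.mean * ∑ n ∈ Ico a b, α n ≤ ∑ n ∈ Ico a b, α n * y n

theorem isBlock_singleton (k : ℕ) (hα : 0 < α k) : (⟨y k, α k, 1⟩ : PavGroup).IsBlock y α k where
  wt_pos := hα
  wt_eq := by simp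
  wt_mul_mean := by simp [mul_comm]
  mean_mul_le b hb := by
    change b ≤ k + 1 at hb
    rcases (show b ≤ k ∨ b = k + 1 by omega) with hb | rfl
    · simp [Ico_eq_empty_of_le hb]
    · simp [mul_comm]

theorem IsBlock.merge (hα : ∀ n, 0 ≤ α n) (hp : p.IsBlock y α a)
    (hg : g.IsBlock y α (a + p.size)) (hle : g.mean ≤ p.mean) : (p.merge g).IsBlock y α a := by
  set c := a + p.size
  set μ := (p.merge g).mean
  have hw : 0 < p.wt + g.wt := add_pos hp.wt_pos hg.wt_pos
  have hμ : (p.wt + g.wt) * μ = p.wt * p.mean + g.wt * g.mean := mul_div_cancel₀ _ hw.ne'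
  have hμg : g.mean ≤ μ := by nlinarith [hp.wt_pos]
  have hμp : μ ≤ p.mean := by nlinarith [hg.wt_pos]
  have hend : a + (p.merge g).size = c + g.size := Nat.add_assoc _ _ _ |>.symm
  have hsplit (f : ℕ → ℝ) {b : ℕ} (hcb : c ≤ b) :
      ∑ n ∈ Ico a b, f n = ∑ n ∈ Ico a c, f n + ∑ n ∈ Ico c b, f n :=
    (sum_Ico_consecutive f (by omega) hcb).symm
  refine ⟨hw, ?_, ?_, fun b hb => ?_⟩
  · rw [hend, hsplit _ le_self_add, ← hp.wt_eq, ← hg.wt_eq]; rfl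
  · rw [hend, hsplit _ le_self_add, ← hp.wt_mul_mean, ← hg.wt_mul_mean]; exact hμ
  rcases le_or_gt b c with hbc | hcb
  · have hA : 0 ≤ ∑ n ∈ Ico a b, α n := sum_nonneg fun n _ => hα n
    calc μ * ∑ n ∈ Ico a b, α n ≤ p.mean * ∑ n ∈ Ico a b, α n := by gcongr
      _ ≤ ∑ n ∈ Ico a b, α n * y n := hp.mean_mul_le b hbc
  · rw [hsplit _ hcb.le, hsplit _ hcb.le, ← hp.wt_eq, ← hp.wt_mul_mean]
    have hrest := hg.mean_mul_le b (by omega)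
    have hrest_wt : ∑ n ∈ Ico c b, α n ≤ g.wt := by
      rw [hg.wt_eq]
      exact sum_le_sum_of_subset_of_nonneg (Ico_subset_Ico_right (by omega)) fun n _ _ => hα n
    -- the merged mean balances the two blocks: `p.wt * (p.mean - μ) = g.wt * (μ - g.mean)`
    nlinarith [mul_le_mul_of_nonneg_left hrest_wt (sub_nonneg.2 hμg)]

theorem IsBlock.sum_sq_le (hα : ∀ n, 0 ≤ α n) (hg : g.IsBlock y α a) {z : ℕ → ℝ}
    (hz : Monotone z) :
    ∑ n ∈ Ico a (a + g.size), α n * (g.mean - y n) ^ 2 ≤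
      ∑ n ∈ Ico a (a + g.size), α n * (z n - y n) ^ 2 := by
  set s := Ico a (a + g.size)
  have htotal : ∑ n ∈ s, α n * (y n - g.mean) = 0 := by
    rw [sum_mul_sub_eq, ← hg.wt_eq, ← hg.wt_mul_mean]; ring
  have habel : ∑ n ∈ s, α n * (y n - g.mean) * z n ≤ 0 :=
    sum_Ico_mul_nonpos_of_partialSums_nonneg hz
      (fun b hb => by rw [sum_mul_sub_eq]; linarith [hg.mean_mul_le b hb]) htotal
  have hspread : 0 ≤ ∑ n ∈ s, α n * (z n - g.mean) ^ 2 :=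
    sum_nonneg fun n _ => mul_nonneg (hα n) (sq_nonneg _)
  have hexpand : ∑ n ∈ s, α n * (z n - y n) ^ 2 =
      ∑ n ∈ s, α n * (g.mean - y n) ^ 2 + ∑ n ∈ s, α n * (z n - g.mean) ^ 2
        - 2 * ∑ n ∈ s, α n * (y n - g.mean) * z n + 2 * g.mean * ∑ n ∈ s, α n * (y n - g.mean) := by
    rw [mul_sum, mul_sum, ← sum_add_distrib, ← sum_sub_distrib, ← sum_add_distrib]
    exact sum_congr rfl fun n _ => by ring
  rw [hexpand, htotal]
  linarith

end PavGroup

/-- `s` lists the groups top first, and `m` is the number of samples they cover. -/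
inductive IsPavStack (y α : ℕ → ℝ) : List PavGroup → ℕ → Prop
  | nil : IsPavStack y α [] 0
  | cons {s : List PavGroup} {a : ℕ} {g : PavGroup} : IsPavStack y α s a → g.IsBlock y α a →
      (∀ p ∈ s, p.mean ≤ g.mean) → IsPavStack y α (g :: s) (a + g.size)

section PavStack

variable {y α : ℕ → ℝ}

theorem IsPavStack.pavPush (hα : ∀ n, 0 ≤ α n) {s : List PavGroup} :
    ∀ {a : ℕ} {g : PavGroup}, IsPavStack y α s a → g.IsBlock y α a →
      IsPavStack y α (pavPush s g) (a + g.size) := by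
  induction s with
  | nil =>
    rintro _ g ⟨⟩ hg
    exact .cons .nil hg (by simp)
  | cons p rest ih =>
    intro _ g hs hg
    cases hs with | cons hrest hp hp_top => ?_
    rw [_root_.pavPush]
    split_ifs with hle
    · rw [Nat.add_assoc]
      exact ih hrest (hp.merge hα hg hle)
    · refine .cons (.cons hrest hp hp_top) hg ?_
      rintro q (_ | ⟨_, hq⟩)
      · exact (not_le.1 hle).le
      · exact (hp_top q hq).trans (not_le.1 hle).le

theorem isPavStack_pavRun (hα : ∀ n, 0 < α n) (N : ℕ) :
    IsPavStack y α (pavRun ((List.range N).map fun n => (y n, α n))) N := by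
  induction N with
  | zero => exact .nil
  | succ k ih =>
    simp only [pavRun, List.range_succ, List.map_append, List.foldl_append] at ih ⊢
    exact ih.pavPush (fun n => (hα n).le) (PavGroup.isBlock_singleton k (hα k))

theorem pavExpand_cons (g : PavGroup) (s : List PavGroup) :
    pavExpand (g :: s) = pavExpand s ++ List.replicate g.size g.mean := by
  simp [pavExpand]

theorem IsPavStack.length_pavExpand {s : List PavGroup} {m : ℕ} (hs : IsPavStack y α s m) :
    (pavExpand s).length = m := by
  induction hs with
  | nil => rfl
  | cons _ _ _ ih => simp [pavExpand_cons, ih]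

theorem IsPavStack.pairwise_pavExpand {s : List PavGroup} {m : ℕ} (hs : IsPavStack y α s m) :
    (pavExpand s).Pairwise (· ≤ ·) := by
  induction hs with
  | nil => simp [pavExpand]
  | @cons s a g _ _ htop ih =>
    rw [pavExpand_cons, List.pairwise_append]
    refine ⟨ih, List.pairwise_replicate_of_refl, fun x hx x' hx' => ?_⟩
    obtain ⟨q, hq, hxq⟩ := List.mem_flatMap.1 hx
    rw [List.eq_of_mem_replicate hxq, List.eq_of_mem_replicate hx']
    exact htop q (List.mem_reverse.1 hq)

theorem IsPavStack.sum_sq_le (hα : ∀ n, 0 ≤ α n) {s : List PavGroup} {m : ℕ}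
    (hs : IsPavStack y α s m) (z : ℕ → ℝ) (hz : Monotone z) :
    ∑ n ∈ range m, α n * ((pavExpand s).getD n 0 - y n) ^ 2 ≤
      ∑ n ∈ range m, α n * (z n - y n) ^ 2 := by
  induction hs with
  | nil => simp
  | @cons s a g hs hg _ ih =>
    have hlen := hs.length_pavExpand
    rw [← sum_range_add_sum_Ico _ (Nat.le_add_right a g.size),
      ← sum_range_add_sum_Ico _ (Nat.le_add_right a g.size)]
    gcongr ?_ + ?_
    · calc _ = ∑ n ∈ range a, α n * ((pavExpand s).getD n 0 - y n) ^ 2 :=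
            sum_congr rfl fun n hn => by
              rw [pavExpand_cons, List.getD_append _ _ _ _ (by simp_all)]
        _ ≤ _ := ih
    · calc _ = ∑ n ∈ Ico a (a + g.size), α n * (g.mean - y n) ^ 2 :=
            sum_congr rfl fun n hn => by
              have := mem_Ico.1 hn
              rw [pavExpand_cons, List.getD_append_right _ _ _ _ (by omega),
                List.getD_replicate _ (by omega)]
        _ ≤ _ := hg.sum_sq_le hα hz

end PavStack

/-- the online PAV-style algorithm outputs the unique isotonic
regression of the targets under weighted square error. -/
theorem stmt_17 (N : ℕ) (y α : ℕ → ℝ) (hα : ∀ n, 0 < α n)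
    (out : List ℝ)
    (hout : out = pavExpand (pavRun ((List.range N).map fun n => (y n, α n)))) :
    out.length = N ∧
    MonotoneOn (fun n => out.getD n 0) (Set.Iio N) ∧
    (∀ z : ℕ → ℝ, Monotone z →
      (∑ n ∈ Finset.range N, α n * (out.getD n 0 - y n) ^ 2) ≤
        ∑ n ∈ Finset.range N, α n * (z n - y n) ^ 2) ∧
    (∀ z : ℕ → ℝ, Monotone z →
      (∀ w : ℕ → ℝ, Monotone w →
        (∑ n ∈ Finset.range N, α n * (z n - y n) ^ 2) ≤
          ∑ n ∈ Finset.range N, α n * (w n - y n) ^ 2) →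
      ∀ n < N, z n = out.getD n 0) := by
  subst hout
  set s := pavRun ((List.range N).map fun n => (y n, α n))
  have hs : IsPavStack y α s N := isPavStack_pavRun hα N
  have hlen : (pavExpand s).length = N := hs.length_pavExpand
  have hmono : MonotoneOn (fun n => (pavExpand s).getD n 0) (Set.Iio N) :=
    hlen ▸ hs.pairwise_pavExpand.monotoneOn_getD 0
  have hopt := hs.sum_sq_le fun n => (hα n).le
  refine ⟨hlen, hmono, hopt, fun z hz hz_min n hn => ?_⟩
  obtain ⟨v, hv, hv_eq⟩ := hmono.exists_monotone_extension
    ((Set.finite_Iio N).image _).bddBelow ((Set.finite_Iio N).image _).bddAbove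
  have hv_err : ∑ n ∈ range N, α n * (v n - y n) ^ 2 =
      ∑ n ∈ range N, α n * ((pavExpand s).getD n 0 - y n) ^ 2 :=
    sum_congr rfl fun k hk => by
      rw [← show (pavExpand s).getD k 0 = v k from hv_eq (mem_range.1 hk)]
  exact (eq_of_sum_sq_le_of_isMin hα hv hz (hv_err ▸ hopt) (hv_err ▸ hz_min v hv) n hn).trans
    (hv_eq hn).symm
end

section
/- Let l_1, ..., l_N : ℝ → ℝ be strictly convex with unique minimizers, and let z* be the unique minimizer of Σ l_n(z_n) over nondecreasing sequences. Then z* is a staircase: {1,...,N} partitions into consecutive blocks on which z* is constant, and on each block B the common value equals argmin of Σ_{n∈B} l_n, with the block values strictly increasing across blocks. -/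
/-!
A monotone function on `Fin N` is constant on consecutive blocks, one per value it takes, and
these values increase strictly. For the block sum `g y = ∑_{z* n = v} l n y` at a value `v`,
moving all of `z*`'s entries equal to `v` to a nearby `y` keeps `z*` monotone, since the other
values are a positive distance away from `v`. Minimality of `z*` therefore makes `v` a local
minimum of the convex function `g`, hence a global one.
-/

open Finset Filter Topology

theorem ConvexOn.finset_sum {𝕜 E β ι : Type*} [Semiring 𝕜] [PartialOrder 𝕜]
    [AddCommMonoid E] [SMul 𝕜 E] [AddCommMonoid β] [PartialOrder β] [IsOrderedAddMonoid β]
    [Module 𝕜 β] {t : Set E} {s : Finset ι} {f : ι → E → β} (ht : Convex 𝕜 t)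
    (hf : ∀ i ∈ s, ConvexOn 𝕜 t (f i)) : ConvexOn 𝕜 t fun x => ∑ i ∈ s, f i x := by
  classical
  induction s using Finset.induction_on with
  | empty => simpa using convexOn_const (0 : β) ht
  | insert i s hi ih =>
    simp only [sum_insert hi]
    exact (hf i (mem_insert_self i s)).add (ih fun j hj => hf j (mem_insert_of_mem hj))

theorem Fin.mem_iff_lt_card_of_isLowerSet {N : ℕ} {s : Finset (Fin N)}
    (hs : IsLowerSet (s : Set (Fin N))) (n : Fin N) : n ∈ s ↔ n.val < #s := by
  constructor
  · intro hn
    have := card_le_card (show Iic n ⊆ s from fun m hm => hs (mem_Iic.1 hm) hn)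
    rw [Fin.card_Iic] at this
    omega
  · intro h
    by_contra hn
    have := card_le_card (show s ⊆ Iio n from
      fun m hm => mem_Iio.2 (lt_of_not_ge fun hnm => hn (hs hnm hm)))
    rw [Fin.card_Iio] at this
    omega

theorem Fin.exists_blocks_of_monotone_of_surjective {N I : ℕ} {r : Fin N → Fin I}
    (hr : Monotone r) (hsurj : Function.Surjective r) :
    ∃ b : Fin (I + 1) → ℕ, StrictMono b ∧ b 0 = 0 ∧ b (Fin.last I) = N ∧
      ∀ i n, (b i.castSucc ≤ n.val ∧ n.val < b i.succ ↔ r n = i) := by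
  classical
  set b : Fin (I + 1) → ℕ := fun j => #{n | (r n : ℕ) < j}
  have hb : ∀ j n, n.val < b j ↔ (r n : ℕ) < j := fun j n => by
    have hlower : IsLowerSet (({n | (r n : ℕ) < j} : Finset (Fin N)) : Set (Fin N)) :=
      fun m k hkm hm => by
        simp only [coe_filter, mem_univ, true_and, Set.mem_ofPred_eq] at hm ⊢
        exact lt_of_le_of_lt (hr hkm) hm
    simpa using (Fin.mem_iff_lt_card_of_isLowerSet hlower n).symm
  have hblock : ∀ i n, (b i.castSucc ≤ n.val ∧ n.val < b i.succ ↔ r n = i) := by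
    intro i n
    rw [← not_lt, hb, hb, Fin.ext_iff]
    simp only [Fin.val_castSucc, Fin.val_succ]
    omega
  refine ⟨b, Fin.strictMono_iff_lt_succ.2 fun i => ?_, by simp [b], by simp [b], hblock⟩
  obtain ⟨n, hn⟩ := hsurj i
  have := (hblock i n).2 hn
  omega

theorem Monotone.exists_strictMono_comp_surjective {β : Type*} [LinearOrder β] {N : ℕ}
    {f : Fin N → β} (hf : Monotone f) :
    ∃ (I : ℕ) (r : Fin N → Fin I) (v : Fin I → β),
      Monotone r ∧ Function.Surjective r ∧ StrictMono v ∧ ∀ n, f n = v (r n) := by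
  classical
  set S := univ.image f
  let e := S.orderIsoOfFin rfl
  have hmem : ∀ n, f n ∈ S := fun n => mem_image_of_mem f (mem_univ n)
  refine ⟨#S, fun n => e.symm ⟨f n, hmem n⟩, fun i => e i, fun m n h => e.symm.monotone (hf h),
    fun i => ?_, fun i j h => e.strictMono h, fun n => by simp⟩
  obtain ⟨n, -, hn⟩ := mem_image.1 (e i).2
  exact ⟨n, e.symm_apply_eq.2 (Subtype.ext hn)⟩

theorem Monotone.exists_staircase {β : Type*} [LinearOrder β] {N : ℕ} {f : Fin N → β}
    (hf : Monotone f) :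
    ∃ (I : ℕ) (b : Fin (I + 1) → ℕ) (v : Fin I → β),
      StrictMono b ∧ b 0 = 0 ∧ b (Fin.last I) = N ∧ StrictMono v ∧
      ∀ i n, (b i.castSucc ≤ n.val ∧ n.val < b i.succ ↔ f n = v i) := by
  obtain ⟨I, r, v, hr, hsurj, hv, hfv⟩ := hf.exists_strictMono_comp_surjective
  obtain ⟨b, hb, hb0, hbN, hblock⟩ := Fin.exists_blocks_of_monotone_of_surjective hr hsurj
  exact ⟨I, b, v, hb, hb0, hbN, hv, fun i n => by rw [hblock, hfv, hv.injective.eq_iff]⟩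

theorem Monotone.eventually_monotone_update_level {α β : Type*} [Preorder α] [Finite α]
    [LinearOrder β] [TopologicalSpace β] [OrderTopology β] {f : α → β} (hf : Monotone f)
    (v : β) : ∀ᶠ y in 𝓝 v, Monotone fun a => if f a = v then y else f a := by
  have hnear : ∀ᶠ y in 𝓝 v, ∀ a, (f a < v → f a < y) ∧ (v < f a → y < f a) :=
    eventually_all.2 fun a => by
      refine Eventually.and ?_ ?_
      · by_cases h : f a < v
        · exact (eventually_gt_nhds h).mono fun y hy _ => hy
        · exact Eventually.of_forall fun y h' => absurd h' h
      · by_cases h : v < f a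
        · exact (eventually_lt_nhds h).mono fun y hy _ => hy
        · exact Eventually.of_forall fun y h' => absurd h' h
  filter_upwards [hnear] with y hy m n hmn
  dsimp only
  split_ifs with hm hn hn
  · exact le_rfl
  · exact ((hy n).2 (lt_of_le_of_ne (hm.symm.trans_le (hf hmn)) (Ne.symm hn))).le
  · exact ((hy m).1 (lt_of_le_of_ne ((hf hmn).trans_eq hn) hm)).le
  · exact hf hmn

theorem sum_level_le_of_isotonic_minimizer {ι : Type*} [Fintype ι] [Preorder ι]
    {l : ι → ℝ → ℝ} (hconv : ∀ n, ConvexOn ℝ Set.univ (l n)) {zstar : ι → ℝ}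
    (hmin : ∀ z : ι → ℝ, Monotone z → (∑ n, l n (zstar n)) ≤ ∑ n, l n (z n))
    (hmono : Monotone zstar) (v w : ℝ) :
    (∑ n ∈ univ.filter (fun n => zstar n = v), l n v) ≤
      ∑ n ∈ univ.filter (fun n => zstar n = v), l n w := by
  classical
  set B := univ.filter (fun n => zstar n = v)
  have hsplit : ∀ y, ∑ n, l n (if zstar n = v then y else zstar n) =
      ∑ n ∈ B, l n y + ∑ n ∈ univ.filter (fun n => zstar n ≠ v), l n (zstar n) := fun y => by
    simp only [apply_ite (l _), sum_ite, B]
  have hstar : ∑ n, l n (zstar n) =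
      ∑ n ∈ B, l n v + ∑ n ∈ univ.filter (fun n => zstar n ≠ v), l n (zstar n) := by
    rw [← hsplit]
    exact sum_congr rfl fun n _ => by split_ifs with h <;> simp [h]
  refine IsMinOn.of_isLocalMin_of_convex_univ ?_
    (ConvexOn.finset_sum convex_univ fun n _ => hconv n) w
  filter_upwards [hmono.eventually_monotone_update_level v] with y hy
  have := hmin _ hy
  rw [hstar, hsplit] at this
  linarith

theorem stmt_18_general (N : ℕ) (l : Fin N → ℝ → ℝ)
    (hconv : ∀ n, StrictConvexOn ℝ Set.univ (l n))
    (zstar : Fin N → ℝ) (hmono : Monotone zstar)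
    (hmin : ∀ z : Fin N → ℝ, Monotone z →
      (∑ n, l n (zstar n)) ≤ ∑ n, l n (z n)) :
    ∃ (I : ℕ) (b : Fin (I + 1) → ℕ) (v : Fin I → ℝ),
      StrictMono b ∧ b 0 = 0 ∧ b (Fin.last I) = N ∧ StrictMono v ∧
      (∀ (i : Fin I) (n : Fin N),
        b i.castSucc ≤ n.val → n.val < b i.succ → zstar n = v i) ∧
      (∀ i : Fin I, ∀ w : ℝ,
        (∑ n ∈ Finset.univ.filter
            (fun n : Fin N => b i.castSucc ≤ n.val ∧ n.val < b i.succ),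
          l n (v i)) ≤
        ∑ n ∈ Finset.univ.filter
            (fun n : Fin N => b i.castSucc ≤ n.val ∧ n.val < b i.succ),
          l n w) := by
  obtain ⟨I, b, v, hb, hb0, hbN, hv, hblock⟩ := hmono.exists_staircase
  refine ⟨I, b, v, hb, hb0, hbN, hv, fun i n h₁ h₂ => (hblock i n).1 ⟨h₁, h₂⟩, fun i w => ?_⟩
  rw [filter_congr fun n _ => hblock i n]
  exact sum_level_le_of_isotonic_minimizer (fun n => (hconv n).convexOn) hmin hmono (v i) w

/-- the unique isotonic minimizer of a sum of strictly convex
per-sample losses is a staircase: the indices partition into consecutive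
blocks on which it is constant, the common value on each block is the unique
minimizer of the block's total loss, and the block values strictly increase. -/
theorem stmt_18 (N : ℕ) (l : Fin N → ℝ → ℝ)
    (hconv : ∀ n, StrictConvexOn ℝ Set.univ (l n))
    (hattain : ∀ s : Finset (Fin N), s.Nonempty →
      ∃! y : ℝ, ∀ z : ℝ, (∑ n ∈ s, l n y) ≤ ∑ n ∈ s, l n z)
    (zstar : Fin N → ℝ) (hmono : Monotone zstar)
    (hmin : ∀ z : Fin N → ℝ, Monotone z →
      (∑ n, l n (zstar n)) ≤ ∑ n, l n (z n))
    (huniq : ∀ z : Fin N → ℝ, Monotone z →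
      (∀ w : Fin N → ℝ, Monotone w → (∑ n, l n (z n)) ≤ ∑ n, l n (w n)) →
      z = zstar) :
    ∃ (I : ℕ) (b : Fin (I + 1) → ℕ) (v : Fin I → ℝ),
      StrictMono b ∧ b 0 = 0 ∧ b (Fin.last I) = N ∧ StrictMono v ∧
      (∀ (i : Fin I) (n : Fin N),
        b i.castSucc ≤ n.val → n.val < b i.succ → zstar n = v i) ∧
      (∀ i : Fin I, ∀ w : ℝ,
        (∑ n ∈ Finset.univ.filter
            (fun n : Fin N => b i.castSucc ≤ n.val ∧ n.val < b i.succ),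
          l n (v i)) ≤
        ∑ n ∈ Finset.univ.filter
            (fun n : Fin N => b i.castSucc ≤ n.val ∧ n.val < b i.succ),
          l n w) :=
  stmt_18_general N l hconv zstar hmono hmin
end
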